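/- arXiv:2411.15347 — 5 statements merged into one kernel-verified Lean document; each statement's English description precedes it below -/
import Mathlib

section
/- Let k be a field and let f = ∏_{i=1}^n (X−r_i) ∈ k[X] with r_1,…,r_n ∈ k pairwise distinct (so all e_i = 1 and N = n). Then the duplicant of f equals the discriminant of f: 𝔇(f) = (det Σ(f))² = ∏_{1≤i<j≤n} (r_i−r_j)². -/
open Polynomial Finset Matrix

/-- **Duplicant equals discriminant.** For `f = ∏ (X - rᵢ)` with pairwise distinct
roots (all multiplicities equal to 1), the duplicant `(det Σ(f))²` equals the
discriminant `∏_{i<j} (rᵢ - rⱼ)²`. Here the row of `Σ(f)` indexed by `ℓ` consists of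
the coefficients of `f/(X - r_ℓ) = ∏_{m ≠ ℓ} (X - r_m)`. -/
theorem duplicant_eq_discriminant (k : Type*) [Field k] (n : ℕ) (r : Fin n → k)
    (hr : Function.Injective r)
    (M : Matrix (Fin n) (Fin n) k)
    (hM : ∀ ℓ i : Fin n,
      M ℓ i = (∏ m ∈ Finset.univ.erase ℓ, (X - C (r m))).coeff i.1) :
    M.det ^ 2 = ∏ i : Fin n, ∏ j ∈ Finset.Ioi i, (r i - r j) ^ 2 := by
  set P : Fin n → k[X] := fun ℓ => ∏ m ∈ Finset.univ.erase ℓ, (X - C (r m)) with hP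
  have hdeg : ∀ ℓ, (P ℓ).natDegree < n := by
    intro ℓ
    have h1 : (P ℓ).natDegree ≤ (Finset.univ.erase ℓ).card := by
      refine le_trans (Polynomial.natDegree_prod_le _ _) ?_
      simpa using Finset.sum_le_card_nsmul _ _ 1 (by simp [Polynomial.natDegree_X_sub_C])
    have h2 : (Finset.univ.erase ℓ).card < n := by
      rw [Finset.card_erase_of_mem (Finset.mem_univ ℓ)]
      have := ℓ.pos
      simp only [Finset.card_univ, Fintype.card_fin]
      omega
    omega
  have key : Matrix.vandermonde r * Mᵀ =
      Matrix.diagonal (fun ℓ => ∏ m ∈ Finset.univ.erase ℓ, (r ℓ - r m)) := by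
    ext j ℓ
    have : (Matrix.vandermonde r * Mᵀ) j ℓ = (P ℓ).eval (r j) := by
      rw [Polynomial.eval_eq_sum_range' (hdeg ℓ)]
      simp [Matrix.mul_apply, Matrix.vandermonde, hM, Fin.sum_univ_eq_sum_range
        (fun i => r j ^ i * (P ℓ).coeff i), mul_comm]
      exact Fin.sum_univ_eq_sum_range (fun i => r j ^ i * (P ℓ).coeff i) n
    rw [this, Polynomial.eval_prod]
    rcases eq_or_ne j ℓ with h | h
    · subst h; simp
    · rw [Matrix.diagonal_apply_ne _ h]
      apply Finset.prod_eq_zero (Finset.mem_erase.mpr ⟨h, Finset.mem_univ j⟩)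
      simp
  have hdV : (Matrix.vandermonde r).det ≠ 0 := by
    rw [Matrix.det_vandermonde_ne_zero_iff]; exact hr
  have hdet := congrArg Matrix.det key
  rw [Matrix.det_mul, Matrix.det_transpose, Matrix.det_diagonal] at hdet
  have hfac : ∏ ℓ, ∏ m ∈ Finset.univ.erase ℓ, (r ℓ - r m) =
      (∏ i, ∏ j ∈ Finset.Ioi i, (r i - r j)) * (Matrix.vandermonde r).det := by
    rw [Matrix.det_vandermonde, ← Finset.prod_mul_distrib]
    simp_rw [← Finset.prod_mul_distrib]
    simp_rw [← Finset.compl_singleton]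
    convert (Finset.prod_prod_Ioi_mul_eq_prod_prod_off_diag (fun m ℓ => r ℓ - r m)).symm using 2 with i _
  have hMdet : M.det = ∏ i, ∏ j ∈ Finset.Ioi i, (r i - r j) := by
    exact mul_left_cancel₀ hdV (hdet.trans (hfac.trans (mul_comm _ _)))
  rw [hMdet, ← Finset.prod_pow]
  exact Finset.prod_congr rfl fun i _ => (Finset.prod_pow _ _ _).symm
end

section
/- Let R be a commutative ring and n ≥ 1. Let σ_1,…,σ_n ∈ R[x_1,…,x_n] denote the elementary symmetric polynomials in n variables. Then the Jacobian determinant of (σ_1,…,σ_n), i.e., the determinant of the n×n matrix whose (i,j) entry is the partial derivative ∂σ_j/∂x_i, equals ∏_{1≤i<j≤n} (x_i − x_j) in R[x_1,…,x_n]. -/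
open MvPolynomial

section JacobianEsymmAux

variable {R : Type*} [CommRing R] {n : ℕ}

theorem pderiv_prod_X (i : Fin n) (t : Finset (Fin n)) :
    pderiv i (∏ l ∈ t, (X l : MvPolynomial (Fin n) R)) =
      if i ∈ t then ∏ l ∈ t.erase i, X l else 0 := by
  induction t using Finset.induction_on with
  | empty => simp
  | @insert a t ha ih =>
    rw [Finset.prod_insert ha, pderiv_mul, ih]
    by_cases hia : i = a
    · subst hia
      simp [ha, Finset.erase_insert ha]
    · rw [pderiv_X_of_ne (Ne.symm hia)]
      by_cases hit : i ∈ t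
      · simp [hit, hia, Finset.erase_insert_of_ne (Ne.symm hia),
          Finset.prod_insert (fun h => ha (Finset.mem_of_mem_erase h)),
          Finset.mem_insert]
      · simp [hit, hia]

/-- The restricted elementary symmetric polynomial omitting variable `i`. -/
noncomputable def E (R : Type*) [CommRing R] {n : ℕ} (i : Fin n) (m : ℕ) :
    MvPolynomial (Fin n) R :=
  ∑ t ∈ (Finset.univ.erase i).powersetCard m, ∏ l ∈ t, X l

theorem pderiv_esymm (i : Fin n) (m : ℕ) :
    pderiv i (esymm (Fin n) R (m + 1)) = E R i m := by
  rw [esymm, map_sum]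
  simp_rw [pderiv_prod_X]
  rw [← Finset.sum_filter, E]
  refine Finset.sum_bij' (fun t _ => t.erase i) (fun s _ => insert i s) ?_ ?_ ?_ ?_ ?_
  · intro t ht
    simp only [Finset.mem_filter, Finset.mem_powersetCard] at ht
    rw [Finset.mem_powersetCard]
    exact ⟨Finset.erase_subset_erase i ht.1.1,
      by simp [Finset.card_erase_of_mem ht.2, ht.1.2]⟩
  · intro s hs
    rw [Finset.mem_powersetCard] at hs
    have his : i ∉ s := fun h => (Finset.mem_erase.mp (hs.1 h)).1 rfl
    simp only [Finset.mem_filter, Finset.mem_powersetCard]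
    exact ⟨⟨Finset.subset_univ _, by rw [Finset.card_insert_of_notMem his, hs.2]⟩,
      Finset.mem_insert_self i s⟩
  · intro t ht
    simp only [Finset.mem_filter] at ht
    exact Finset.insert_erase ht.2
  · intro s hs
    rw [Finset.mem_powersetCard] at hs
    exact Finset.erase_insert (fun h => (Finset.mem_erase.mp (hs.1 h)).1 rfl)
  · intro t ht
    rfl

theorem esymm_decomp (i : Fin n) (m : ℕ) :
    esymm (Fin n) R (m + 1) = E R i (m + 1) + X i * E R i m := by
  rw [esymm, ← Finset.sum_filter_add_sum_filter_not _ (fun t => i ∈ t), add_comm]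
  congr 1
  swap
  · rw [E, Finset.mul_sum]
    refine Finset.sum_bij' (fun t _ => t.erase i) (fun s _ => insert i s) ?_ ?_ ?_ ?_ ?_
    · intro t ht
      simp only [Finset.mem_filter, Finset.mem_powersetCard] at ht
      rw [Finset.mem_powersetCard]
      exact ⟨Finset.erase_subset_erase i ht.1.1,
        by simp [Finset.card_erase_of_mem ht.2, ht.1.2]⟩
    · intro s hs
      rw [Finset.mem_powersetCard] at hs
      have his : i ∉ s := fun h => (Finset.mem_erase.mp (hs.1 h)).1 rfl
      simp only [Finset.mem_filter, Finset.mem_powersetCard]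
      exact ⟨⟨Finset.subset_univ _, by rw [Finset.card_insert_of_notMem his, hs.2]⟩,
        Finset.mem_insert_self i s⟩
    · intro t ht
      simp only [Finset.mem_filter] at ht
      exact Finset.insert_erase ht.2
    · intro s hs
      rw [Finset.mem_powersetCard] at hs
      exact Finset.erase_insert (fun h => (Finset.mem_erase.mp (hs.1 h)).1 rfl)
    · intro t ht
      simp only [Finset.mem_filter] at ht
      exact (Finset.mul_prod_erase t X ht.2).symm
  · rw [E]
    congr 1
    ext t
    simp only [Finset.mem_filter, Finset.mem_powersetCard, Finset.subset_erase,
      Finset.subset_univ, true_and]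
    tauto

theorem E_eq_sum (i : Fin n) (m : ℕ) :
    E R i m = ∑ k ∈ Finset.range (m + 1), (-X i) ^ k * esymm (Fin n) R (m - k) := by
  induction m with
  | zero => simp [E, esymm_zero]
  | succ m ih =>
    have h := esymm_decomp (R := R) i m
    rw [Finset.sum_range_succ' (fun k => (-X i) ^ k * esymm (Fin n) R (m + 1 - k))]
    have hfg : (∑ k ∈ Finset.range (m + 1), (-X i) ^ (k + 1) * esymm (Fin n) R (m + 1 - (k + 1)))
        = -(X i * E R i m) := by
      rw [ih, Finset.mul_sum, ← Finset.sum_neg_distrib]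
      apply Finset.sum_congr rfl
      intro k _
      have hk : m + 1 - (k + 1) = m - k := by omega
      rw [hk]; ring
    rw [hfg]
    simp only [pow_zero, one_mul, Nat.sub_zero]
    rw [h]; ring

end JacobianEsymmAux

/-- **Jacobian of the elementary symmetric polynomials.** The determinant of the
matrix whose `(i, j)` entry is `∂σ_{j+1}/∂x_i` equals the Vandermonde product
`∏_{i<j} (x_i - x_j)`. -/
theorem jacobian_esymm (R : Type*) [CommRing R] (n : ℕ) (hn : 1 ≤ n) :
    (Matrix.of fun i j : Fin n =>
        MvPolynomial.pderiv i (MvPolynomial.esymm (Fin n) R (j.1 + 1))).det =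
      ∏ i : Fin n, ∏ j ∈ Finset.Ioi i,
        (MvPolynomial.X i - MvPolynomial.X j : MvPolynomial (Fin n) R) := by
  set V : Matrix (Fin n) (Fin n) (MvPolynomial (Fin n) R) :=
    Matrix.vandermonde (fun i => -X i) with hV
  set A : Matrix (Fin n) (Fin n) (MvPolynomial (Fin n) R) :=
    Matrix.of (fun k j : Fin n =>
      if (k : ℕ) ≤ (j : ℕ) then esymm (Fin n) R (j - k) else 0) with hA
  have hM : (Matrix.of fun i j : Fin n =>
      MvPolynomial.pderiv i (MvPolynomial.esymm (Fin n) R (j.1 + 1))) = V * A := by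
    refine Matrix.ext fun i j => ?_
    rw [Matrix.mul_apply]
    simp only [Matrix.of_apply, hV, hA, Matrix.vandermonde]
    rw [pderiv_esymm, E_eq_sum]
    rw [Fin.sum_univ_eq_sum_range
      (fun k => (-X i) ^ k * (if k ≤ (j : ℕ) then esymm (Fin n) R (j - k) else 0))]
    rw [← Finset.sum_subset (Finset.range_subset_range.mpr j.2)
      (fun k _ hk => by
        rw [Finset.mem_range, not_lt] at hk
        rw [if_neg (by omega), mul_zero])]
    apply Finset.sum_congr rfl
    intro k hk
    rw [Finset.mem_range] at hk
    rw [if_pos (by omega)]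
  rw [hM, Matrix.det_mul, Matrix.det_vandermonde]
  have hAdet : A.det = 1 := by
    rw [Matrix.det_of_upperTriangular]
    · apply Finset.prod_eq_one
      intro k _
      simp [hA, esymm_zero]
    · intro a b hab
      simp only [Matrix.of_apply, hA]
      rw [if_neg (by exact fun h => absurd (Fin.le_def.mpr h) (not_le.mpr hab))]
  rw [hAdet, mul_one]
  apply Finset.prod_congr rfl
  intro i _
  apply Finset.prod_congr rfl
  intro j _
  ring
end

section
/- Let k be a field, let f, g ∈ k[X], and let r ∈ k with f(r) = 0, f'(r) ≠ 0 (i.e., r is a simple root of f), and g(r) ≠ 0. Then in the field of formal Laurent series k((X)), the image of the rational function g(X+r)/f(X+r) ∈ k(X) under the canonical embedding has coefficient at degree −1 equal to g(r)/f'(r). -/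
/-!
Shifting to `r` by the Taylor map, `f` becomes `X * Q` with `Q(0) = f'(r) ≠ 0`, so `Q` is a unit
in `k⟦X⟧` and the Laurent expansion of `g(X + r)/f(X + r)` is `X⁻¹ * (G * Q⁻¹)` for the power
series `G = g(X + r)`; its coefficient in degree `-1` is `G(0)/Q(0) = g(r)/f'(r)`.
-/

open Polynomial

namespace LaurentSeries

open HahnSeries PowerSeries

variable {k : Type*} [Field k]

theorem ofPowerSeries_div_X_mul (A Q : PowerSeries k) (hQ : constantCoeff Q ≠ 0) :
    ofPowerSeries ℤ k A / ofPowerSeries ℤ k (PowerSeries.X * Q) =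
      single (-1) 1 * ofPowerSeries ℤ k (A * Q⁻¹) := by
  have hXQ : ofPowerSeries ℤ k (PowerSeries.X * Q) ≠ 0 :=
    (map_ne_zero_iff _ ofPowerSeries_injective).mpr
      (mul_ne_zero PowerSeries.X_ne_zero fun h => hQ (by rw [h, map_zero]))
  rw [div_eq_iff hXQ]
  calc ofPowerSeries ℤ k A
      = single (-1) 1 * single 1 1 * ofPowerSeries ℤ k A * ofPowerSeries ℤ k (Q⁻¹ * Q) := by
        rw [single_mul_single, PowerSeries.inv_mul_cancel _ hQ]; simp
    _ = _ := by rw [map_mul, map_mul, map_mul, ofPowerSeries_X]; ring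

theorem coeff_neg_one_ofPowerSeries_div (A F : PowerSeries k) (hF0 : constantCoeff F = 0)
    (hF1 : coeff 1 F ≠ 0) :
    (ofPowerSeries ℤ k A / ofPowerSeries ℤ k F).coeff (-1) = coeff 0 A / coeff 1 F := by
  obtain ⟨Q, rfl⟩ := X_dvd_iff.mpr hF0
  rw [coeff_succ_X_mul, coeff_zero_eq_constantCoeff] at hF1 ⊢
  have hcoeff := coeff_single_mul_add (r := (1 : k)) (x := ofPowerSeries ℤ k (A * Q⁻¹))
    (a := 0) (b := -1)
  rw [zero_add, one_mul, ← Nat.cast_zero, ofPowerSeries_apply_coeff] at hcoeff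
  rw [ofPowerSeries_div_X_mul A Q hF1, hcoeff, coeff_zero_eq_constantCoeff, map_mul,
    constantCoeff_inv, div_eq_mul_inv]

end LaurentSeries

theorem residue_at_simple_root_general (k : Type*) [Field k] (f g : Polynomial k) (r : k)
    (hf0 : f.eval r = 0) (hf' : f.derivative.eval r ≠ 0) :
    (@algebraMap (RatFunc k) (LaurentSeries k) _ _ (RatFunc.liftAlgebra k (LaurentSeries k))
        (algebraMap (Polynomial k) (RatFunc k) (g.comp (X + C r)) /
          algebraMap (Polynomial k) (RatFunc k) (f.comp (X + C r)))).coeff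
        (-1 : ℤ) = g.eval r / f.derivative.eval r := by
  rw [map_div₀, ← taylor_apply, ← taylor_apply, ← RatFunc.coePolynomial_eq_algebraMap,
    ← RatFunc.coePolynomial_eq_algebraMap, ← RatFunc.coe_coe, ← RatFunc.coe_coe,
    LaurentSeries.coeff_neg_one_ofPowerSeries_div, coeff_coe, coeff_coe, taylor_coeff_zero,
    taylor_coeff_one]
  · rw [← PowerSeries.coeff_zero_eq_constantCoeff, coeff_coe, taylor_coeff_zero, hf0]
  · rwa [coeff_coe, taylor_coeff_one]

/-- **Residue at a simple root.** If `r` is a simple root of `f` (i.e. `f(r) = 0`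
and `f'(r) ≠ 0`) and `g(r) ≠ 0`, then the Laurent expansion of `g/f` about `r`
(i.e. the Laurent series expansion at `0` of `g(X + r)/f(X + r)`) has coefficient
`g(r)/f'(r)` in degree `-1`. -/
theorem residue_at_simple_root (k : Type*) [Field k] (f g : Polynomial k) (r : k)
    (hf0 : f.eval r = 0) (hf' : f.derivative.eval r ≠ 0) (hg : g.eval r ≠ 0) :
    (@algebraMap (RatFunc k) (LaurentSeries k) _ _ (RatFunc.liftAlgebra k (LaurentSeries k))
        (algebraMap (Polynomial k) (RatFunc k) (g.comp (X + C r)) /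
          algebraMap (Polynomial k) (RatFunc k) (f.comp (X + C r)))).coeff
        (-1 : ℤ) = g.eval r / f.derivative.eval r :=
  residue_at_simple_root_general k f g r hf0 hf'
end

section
/- Let k be a field, let r_1,…,r_n ∈ k be pairwise distinct, let e_1,…,e_n be positive integers, let N = e_1+⋯+e_n, let c ∈ k with c ≠ 0, and let F = c·∏_{i=1}^n (X−r_i)^{e_i} ∈ k[X]. Let Σ(F) be the N×N matrix whose ((ℓ,j),i) entry (rows indexed by pairs (ℓ,j) with 1 ≤ ℓ ≤ n, 1 ≤ j ≤ e_ℓ, columns by i ∈ {0,…,N−1}) is the coefficient of X^i in F/(X−r_ℓ)^j = c·(X−r_ℓ)^{e_ℓ−j}·∏_{m≠ℓ}(X−r_m)^{e_m}. Then 𝔇(F) = (det Σ(F))² = c^{2N}·∏_{1≤i<j≤n} (r_i−r_j)^{2·e_i·e_j}. -/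
open Equiv Equiv.Perm

lemma sign_revPerm : ∀ n : ℕ, Perm.sign (Fin.revPerm : Perm (Fin n)) = (-1) ^ (n * (n-1) / 2)
  | 0 => by decide
  | (n+1) => by
    have key : (Fin.revPerm : Perm (Fin (n+1))) =
        finRotate (n+1) * ((finSuccEquiv' (Fin.last n)).symm.permCongr
          (Fin.revPerm : Perm (Fin n)).optionCongr) := by
      ext i
      refine Fin.lastCases ?_ (fun j => ?_) i
      · simp [Fin.rev_last, finSuccEquiv'_at]
      · have h1 : (finSuccEquiv' (Fin.last n)) (Fin.castSucc j) = some j :=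
          finSuccEquiv'_below (Fin.castSucc_lt_last j)
        have h2 : (finSuccEquiv' (Fin.last n)).symm (some (Fin.rev j)) = Fin.castSucc (Fin.rev j) :=
          finSuccEquiv'_symm_some_below (Fin.castSucc_lt_last _)
        simp only [Fin.revPerm_apply, Perm.mul_apply, permCongr_apply, symm_symm,
          optionCongr_apply, h1, Option.map_some, Fin.revPerm_apply, h2,
          finRotate_succ_apply, Fin.coeSucc_eq_succ, Fin.rev_castSucc]
    rw [key, map_mul, sign_finRotate, sign_permCongr, Equiv.optionCongr_sign,
      sign_revPerm n]
    rw [← pow_add]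
    congr 1
    rw [← Nat.choose_two_right, ← Nat.choose_two_right,
      Nat.choose_succ_succ, Nat.choose_one_right]
    rfl

open Equiv Equiv.Perm Matrix Finset

lemma antitriangular_det {k : Type*} [CommRing k] {m : ℕ} (A : Matrix (Fin m) (Fin m) k)
    (h : ∀ a b : Fin m, a.1 + b.1 + 1 < m → A a b = 0) :
    A.det = (-1) ^ (m * (m-1) / 2) * ∏ a, A a a.rev := by
  have hA : A = (A.submatrix id Fin.rev).submatrix id ⇑(Fin.revPerm : Perm (Fin m)) := by
    ext a b; simp [Matrix.submatrix]
  have htri : (A.submatrix id Fin.rev).BlockTriangular OrderDual.toDual := by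
    intro a b hab
    refine h a b.rev ?_
    have hab' : (a : ℕ) < b := hab
    have hb : (b.rev : ℕ) = m - (b + 1) := Fin.val_rev b
    omega
  rw [hA, Matrix.det_permute', Matrix.det_of_lowerTriangular _ htri]
  have : Perm.sign (Fin.revPerm : Perm (Fin m)) = (-1) ^ (m * (m-1) / 2) := sign_revPerm m
  rw [this]
  push_cast
  ring_nf
  simp [Matrix.submatrix]

open Matrix Finset

def fiberEquiv {n : ℕ} {e : Fin n → ℕ} (ℓ : Fin n) :
    Fin (e ℓ) ≃ {p : (Σ ℓ : Fin n, Fin (e ℓ)) // p.1 = ℓ} where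
  toFun j := ⟨⟨ℓ, j⟩, rfl⟩
  invFun p := Fin.cast (congrArg e p.2) p.1.2
  left_inv j := rfl
  right_inv p := by rcases p with ⟨⟨m, s⟩, hm⟩; subst hm; rfl

lemma blockdiag_det {k : Type*} [CommRing k] {n : ℕ} {e : Fin n → ℕ}
    (A : Matrix (Σ ℓ : Fin n, Fin (e ℓ)) (Σ ℓ : Fin n, Fin (e ℓ)) k)
    (h : ∀ p q, p.1 ≠ q.1 → A p q = 0) :
    A.det = ∏ ℓ : Fin n, (Matrix.of fun j s : Fin (e ℓ) => A ⟨ℓ, j⟩ ⟨ℓ, s⟩).det := by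
  have htri : A.BlockTriangular Sigma.fst := fun p q hlt => h p q (ne_of_gt hlt)
  rw [htri.det]
  have hsub : (univ.image (Sigma.fst : (Σ ℓ : Fin n, Fin (e ℓ)) → Fin n)) ⊆ univ :=
    subset_univ _
  have hempty : ∀ ℓ ∈ univ, ℓ ∉ (univ.image (Sigma.fst : (Σ ℓ : Fin n, Fin (e ℓ)) → Fin n)) →
      (A.toSquareBlock Sigma.fst ℓ).det = 1 := by
    intro ℓ _ hℓ
    have : IsEmpty {p : (Σ ℓ : Fin n, Fin (e ℓ)) // p.1 = ℓ} := by
      constructor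
      rintro ⟨p, hp⟩
      exact hℓ (Finset.mem_image.mpr ⟨p, Finset.mem_univ _, hp⟩)
    exact Matrix.det_isEmpty
  rw [Finset.prod_subset hsub hempty]
  apply Finset.prod_congr rfl
  intro ℓ _
  have : (Matrix.of fun j s : Fin (e ℓ) => A ⟨ℓ, j⟩ ⟨ℓ, s⟩)
      = (A.toSquareBlock Sigma.fst ℓ).submatrix (fiberEquiv ℓ) (fiberEquiv ℓ) := rfl
  rw [this, Matrix.det_submatrix_equiv_self]
open Finset

lemma mul_pred_add_self (m : ℕ) : m * (m - 1) + m = m * m := by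
  cases m with
  | zero => rfl
  | succ q => simp [Nat.succ_sub_one]; ring

lemma two_mul_choose_two (m : ℕ) : 2 * m.choose 2 = m * (m - 1) := by
  induction m with
  | zero => rfl
  | succ p ih =>
      rw [Nat.choose_succ_succ, Nat.choose_one_right, Nat.mul_add, ih, Nat.succ_sub_one]
      cases p with
      | zero => rfl
      | succ q => simp [Nat.succ_sub_one]; ring

lemma choose_split (n : ℕ) (e : Fin n → ℕ) :
    (∑ i, e i).choose 2 = (∑ i, (e i).choose 2) + ∑ i, ∑ j ∈ Finset.Ioi i, e i * e j := by
  set A := ∑ i, e i with hA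
  set B := ∑ i, e i * e i with hB
  set S := ∑ i : Fin n, ∑ j ∈ Finset.Ioi i, e i * e j with hS
  set T := ∑ i, e i * (e i - 1) with hT
  have hTA : T + A = B := by
    rw [hT, hA, hB, ← Finset.sum_add_distrib]
    exact Finset.sum_congr rfl fun i _ => mul_pred_add_self (e i)
  have hkey : A * A = 2 * S + B := by
    have h2S : 2 * S = ∑ i : Fin n, ∑ j ∈ Finset.univ.erase i, e j * e i := by
      rw [hS, Finset.mul_sum]
      calc ∑ i : Fin n, 2 * ∑ j ∈ Finset.Ioi i, e i * e j
          = ∑ i : Fin n, ∑ j ∈ Finset.Ioi i, (e j * e i + e i * e j) := by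
            refine Finset.sum_congr rfl fun i _ => ?_
            rw [Finset.mul_sum]
            exact Finset.sum_congr rfl fun j _ => by ring
        _ = _ := by
            rw [Finset.sum_sum_Ioi_add_eq_sum_sum_off_diag]
            exact Finset.sum_congr rfl fun i _ =>
              Finset.sum_congr (by ext x; simp [eq_comm]) (fun _ _ => rfl)
    rw [h2S, hA, hB, Finset.sum_mul_sum, ← Finset.sum_add_distrib]
    refine Finset.sum_congr rfl fun i _ => ?_
    rw [← Finset.sum_erase_add Finset.univ (fun j => e i * e j) (Finset.mem_univ i)]
    congr 1
    exact Finset.sum_congr rfl fun j _ => mul_comm _ _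
  refine Nat.eq_of_mul_eq_mul_left (show 0 < 2 by norm_num) ?_
  rw [two_mul_choose_two, Nat.mul_add, Finset.mul_sum]
  simp_rw [two_mul_choose_two]
  rw [← hT]
  refine Nat.add_right_cancel (?_ : A * (A - 1) + A = T + 2 * S + A)
  calc A * (A - 1) + A = A * A := mul_pred_add_self A
    _ = 2 * S + B := hkey
    _ = 2 * S + (T + A) := by rw [hTA]
    _ = T + 2 * S + A := by ring
open Polynomial Finset

/-- **Duplicant of a non-monic polynomial.** For `F = c·∏ (X - rᵢ)^{eᵢ}` with `c ≠ 0`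
and pairwise distinct roots, the square of the determinant of the coefficient matrix
`Σ(F)` (whose `((ℓ,j), i)` entry is the coefficient of `X^i` in
`F/(X - r_ℓ)^j = c·(X - r_ℓ)^{e_ℓ - j}·∏_{m≠ℓ}(X - r_m)^{e_m}`) equals
`c^{2N}·∏_{i<j} (rᵢ - rⱼ)^{2 eᵢ eⱼ}`. -/
theorem duplicant_non_monic (k : Type*) [Field k] (n : ℕ) (r : Fin n → k)
    (hr : Function.Injective r) (e : Fin n → ℕ) (he : ∀ i, 0 < e i)
    (N : ℕ) (hN : N = ∑ i, e i) (c : k) (hc : c ≠ 0)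
    (σ : ((ℓ : Fin n) × Fin (e ℓ)) ≃ Fin N)
    (M : Matrix (Fin N) (Fin N) k)
    (hM : ∀ (ℓ : Fin n) (j : Fin (e ℓ)) (i : Fin N),
      M (σ ⟨ℓ, j⟩) i =
        (C c * ((X - C (r ℓ)) ^ (e ℓ - (j.1 + 1)) *
          ∏ m ∈ Finset.univ.erase ℓ, (X - C (r m)) ^ (e m))).coeff i.1) :
    M.det ^ 2 = c ^ (2 * N) *
      ∏ i : Fin n, ∏ j ∈ Finset.Ioi i, (r i - r j) ^ (2 * e i * e j) := by
  classical
  -- the monic core polynomial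
  set F₁ : k[X] := ∏ i, (X - C (r i)) ^ e i with hF₁def
  have hmonF : F₁.Monic := monic_prod_of_monic _ _ fun i _ => (monic_X_sub_C (r i)).pow _
  have hdegF : F₁.natDegree = N := by
    rw [hF₁def, natDegree_prod_of_monic _ _ fun i _ => (monic_X_sub_C (r i)).pow _]
    simp only [natDegree_pow, natDegree_X_sub_C, mul_one, hN]
  have hsum_erase : ∀ ℓ : Fin n, e ℓ + ∑ t ∈ Finset.univ.erase ℓ, e t = N := by
    intro ℓ; rw [hN, Finset.add_sum_erase _ e (Finset.mem_univ ℓ)]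
  -- the row polynomials
  set fexp : ((ℓ : Fin n) × Fin (e ℓ)) → Fin n → ℕ :=
    fun p t => if t = p.1 then e p.1 - (p.2.1 + 1) else e t with hfexp
  set P : ((ℓ : Fin n) × Fin (e ℓ)) → k[X] :=
    fun p => C c * ∏ t, (X - C (r t)) ^ (fexp p t) with hPdef
  have hprod_ite : ∀ p : ((ℓ : Fin n) × Fin (e ℓ)),
      ∏ t, (X - C (r t)) ^ (fexp p t) =
      (X - C (r p.1)) ^ (e p.1 - (p.2.1 + 1)) *
        ∏ m ∈ Finset.univ.erase p.1, (X - C (r m)) ^ (e m) := by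
    intro p
    rw [← Finset.mul_prod_erase Finset.univ _ (Finset.mem_univ p.1)]
    simp only [hfexp, if_true]
    congr 1
    exact Finset.prod_congr rfl fun t ht => by rw [if_neg (Finset.mem_erase.mp ht).1]
  have hM' : ∀ (p : (ℓ : Fin n) × Fin (e ℓ)) (i : Fin N), M (σ p) i = (P p).coeff i.1 := by
    rintro ⟨ℓ, j⟩ i
    rw [hM ℓ j i, hPdef]
    simp only
    rw [hprod_ite ⟨ℓ, j⟩]
  have hfexpsum : ∀ p : ((ℓ : Fin n) × Fin (e ℓ)), ∑ t, fexp p t = N - (p.2.1 + 1) := by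
    intro p
    rw [← Finset.add_sum_erase _ _ (Finset.mem_univ p.1)]
    simp only [hfexp, if_true]
    have h1 : ∑ t ∈ Finset.univ.erase p.1, (if t = p.1 then e p.1 - (p.2.1 + 1) else e t)
        = ∑ t ∈ Finset.univ.erase p.1, e t :=
      Finset.sum_congr rfl fun t ht => by rw [if_neg (Finset.mem_erase.mp ht).1]
    rw [h1]
    have h2 := hsum_erase p.1
    have h3 := p.2.2
    omega
  have hPdeg : ∀ p : ((ℓ : Fin n) × Fin (e ℓ)), (P p).natDegree < N := by
    intro p
    rw [hPdef]
    simp only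
    rw [natDegree_C_mul hc,
      natDegree_prod_of_monic _ _ fun t _ => (monic_X_sub_C (r t)).pow _]
    simp only [natDegree_pow, natDegree_X_sub_C, mul_one]
    rw [hfexpsum p]
    have h2 := hsum_erase p.1
    have h3 := he p.1
    omega
  -- the linear functional
  set φ : k[X] →ₗ[k] k := (lcoeff k (N-1)).comp (modByMonicHom F₁) with hφdef
  have hφ : ∀ x : k[X], φ x = (x %ₘ F₁).coeff (N-1) := fun x => rfl
  have hdegF' : F₁.degree = (N : WithBot ℕ) := by
    rw [degree_eq_natDegree hmonF.ne_zero, hdegF]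
  -- multiplication formula
  have hPmul : ∀ p q : ((ℓ : Fin n) × Fin (e ℓ)),
      P p * P q = C (c * c) * ∏ t, (X - C (r t)) ^ (fexp p t + fexp q t) := by
    intro p q
    rw [hPdef]
    simp only
    rw [C_mul]
    have : ∏ t, (X - C (r t)) ^ (fexp p t + fexp q t)
        = (∏ t, (X - C (r t)) ^ (fexp p t)) * ∏ t, (X - C (r t)) ^ (fexp q t) := by
      rw [← Finset.prod_mul_distrib]
      exact Finset.prod_congr rfl fun t _ => pow_add _ _ _
    rw [this]; ring
  -- vanishing entries
  have hzero : ∀ p q : ((ℓ : Fin n) × Fin (e ℓ)),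
      (∀ t, e t ≤ fexp p t + fexp q t) → φ (P p * P q) = 0 := by
    intro p q h
    rw [hφ, hPmul]
    have hdvd : F₁ ∣ C (c * c) * ∏ t, (X - C (r t)) ^ (fexp p t + fexp q t) :=
      Dvd.dvd.mul_left
        (Finset.prod_dvd_prod_of_dvd _ _ fun t _ => pow_dvd_pow _ (h t)) _
    rw [(modByMonic_eq_zero_iff_dvd hmonF).mpr hdvd, coeff_zero]
  -- the Hankel-like matrix
  set H : Matrix (Fin N) (Fin N) k :=
    Matrix.of fun a b : Fin N => φ ((X : k[X]) ^ (a.1 + b.1)) with hHdef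
  have hmod_self : ∀ d : ℕ, d < N → ((X : k[X]) ^ d %ₘ F₁) = X ^ d := by
    intro d hd
    rw [modByMonic_eq_self_iff hmonF, degree_X_pow, hdegF']
    exact_mod_cast hd
  have hH0 : ∀ a b : Fin N, a.1 + b.1 + 1 < N → H a b = 0 := by
    intro a b hab
    show φ ((X : k[X]) ^ (a.1 + b.1)) = 0
    rw [hφ, hmod_self _ (by omega), coeff_X_pow, if_neg (by omega)]
  have hH1 : ∀ a : Fin N, H a a.rev = 1 := by
    intro a
    show φ ((X : k[X]) ^ (a.1 + (a.rev.1))) = 1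
    have hrev : a.rev.1 = N - (a.1 + 1) := Fin.val_rev a
    have ha := a.2
    have hd : a.1 + a.rev.1 = N - 1 := by omega
    rw [hφ, hd, hmod_self _ (by omega), coeff_X_pow, if_pos rfl]
  -- bilinearity
  have hexpand : ∀ p : k[X], p.natDegree < N →
      p = ∑ a : Fin N, (monomial a.1) (p.coeff a.1) :=
    fun p hp => (p.as_sum_range' N hp).trans (Fin.sum_univ_eq_sum_range _ N).symm
  have hbil : ∀ p q : k[X], p.natDegree < N → q.natDegree < N →
      ∑ b : Fin N, (∑ a : Fin N, p.coeff a.1 * H a b) * q.coeff b.1 = φ (p * q) := by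
    intro p q hp hq
    conv_rhs => rw [hexpand p hp, hexpand q hq]
    rw [Finset.sum_mul_sum]
    calc ∑ b : Fin N, (∑ a : Fin N, p.coeff a.1 * H a b) * q.coeff b.1
        = ∑ b : Fin N, ∑ a : Fin N, p.coeff a.1 * H a b * q.coeff b.1 :=
          Finset.sum_congr rfl fun b _ => Finset.sum_mul _ _ _
      _ = ∑ a : Fin N, ∑ b : Fin N, p.coeff a.1 * H a b * q.coeff b.1 := Finset.sum_comm
      _ = _ := ?_
    rw [map_sum]
    refine Finset.sum_congr rfl fun a _ => ?_
    rw [map_sum]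
    refine Finset.sum_congr rfl fun b _ => ?_
    rw [monomial_mul_monomial]
    have hmm : (monomial (a.1 + b.1)) (p.coeff a.1 * q.coeff b.1)
        = (p.coeff a.1 * q.coeff b.1) • (X : k[X]) ^ (a.1 + b.1) := by
      rw [smul_X_eq_monomial]
    rw [hmm, _root_.map_smul, smul_eq_mul]
    show p.coeff a.1 * H a b * q.coeff b.1 = _
    rw [hHdef]
    simp only [Matrix.of_apply]
    ring
  -- entries of the Gram matrix
  have hAent : ∀ p q : ((ℓ : Fin n) × Fin (e ℓ)),
      (M * H * Mᵀ) (σ p) (σ q) = φ (P p * P q) := by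
    intro p q
    rw [← hbil _ _ (hPdeg p) (hPdeg q), Matrix.mul_apply]
    refine Finset.sum_congr rfl fun b _ => ?_
    rw [Matrix.mul_apply, Matrix.transpose_apply, hM' q]
    congr 1
    exact Finset.sum_congr rfl fun a _ => by rw [hM' p]
  -- off-diagonal blocks vanish
  have hoffdiag : ∀ p q : ((ℓ : Fin n) × Fin (e ℓ)), p.1 ≠ q.1 →
      (M * H * Mᵀ) (σ p) (σ q) = 0 := by
    intro p q hpq
    rw [hAent]
    apply hzero
    intro t
    rw [hfexp]
    simp only
    by_cases h1 : t = p.1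
    · rw [if_pos h1, if_neg (by rw [h1]; exact hpq)]; omega
    · rw [if_neg h1]
      by_cases h2 : t = q.1
      · rw [if_pos h2]; omega
      · rw [if_neg h2]; omega
  -- within-block anti-triangularity
  have hintri : ∀ (ℓ : Fin n) (j s : Fin (e ℓ)), j.1 + s.1 + 1 < e ℓ →
      φ (P ⟨ℓ, j⟩ * P ⟨ℓ, s⟩) = 0 := by
    intro ℓ j s hjs
    apply hzero
    intro t
    rw [hfexp]
    simp only
    by_cases h1 : t = ℓ
    · rw [if_pos h1, if_pos h1]
      subst h1
      have := j.2; have := s.2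
      omega
    · rw [if_neg h1, if_neg h1]; omega
  -- anti-diagonal value
  have hdiagval : ∀ (ℓ : Fin n) (j s : Fin (e ℓ)), j.1 + s.1 + 1 = e ℓ →
      φ (P ⟨ℓ, j⟩ * P ⟨ℓ, s⟩) = c ^ 2 * ∏ t ∈ Finset.univ.erase ℓ, (r ℓ - r t) ^ (e t) := by
    intro ℓ j s hjs
    set G : k[X] := ∏ t ∈ Finset.univ.erase ℓ, (X - C (r t)) ^ (e t) with hGdef
    have hGmon : G.Monic := monic_prod_of_monic _ _ fun t _ => (monic_X_sub_C (r t)).pow _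
    have hGdeg : G.natDegree = ∑ t ∈ Finset.univ.erase ℓ, e t := by
      rw [hGdef, natDegree_prod_of_monic _ _ fun t _ => (monic_X_sub_C (r t)).pow _]
      simp only [natDegree_pow, natDegree_X_sub_C, mul_one]
    have hF₁G : F₁ = (X - C (r ℓ)) ^ (e ℓ) * G := by
      rw [hF₁def, hGdef, ← Finset.mul_prod_erase Finset.univ _ (Finset.mem_univ ℓ)]
    have hprodPP : P ⟨ℓ, j⟩ * P ⟨ℓ, s⟩
        = C (c * c) * ((X - C (r ℓ)) ^ (e ℓ - 1) * (G * G)) := by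
      rw [hPdef]
      simp only
      rw [hprod_ite ⟨ℓ, j⟩, hprod_ite ⟨ℓ, s⟩]
      have hpow : (X - C (r ℓ)) ^ (e ℓ - (j.1 + 1)) * (X - C (r ℓ)) ^ (e ℓ - (s.1 + 1))
          = (X - C (r ℓ)) ^ (e ℓ - 1) := by
        rw [← pow_add]
        congr 1
        have := j.2; have := s.2
        omega
      rw [C_mul, ← hpow, ← hGdef]
      ring
    obtain ⟨G', hG'⟩ := X_sub_C_dvd_sub_C_eval (a := r ℓ) (p := G)
    have hpow2 : (X - C (r ℓ)) ^ (e ℓ - 1) * (X - C (r ℓ)) = (X - C (r ℓ)) ^ (e ℓ) := by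
      rw [← pow_succ]
      congr 1
      have := he ℓ
      omega
    have hsplit : P ⟨ℓ, j⟩ * P ⟨ℓ, s⟩
        = C (c * c * G.eval (r ℓ)) * ((X - C (r ℓ)) ^ (e ℓ - 1) * G)
          + F₁ * (C (c * c) * G') := by
      rw [hprodPP, hF₁G]
      simp only [C_mul]
      linear_combination (C c * C c * (X - C (r ℓ)) ^ (e ℓ - 1) * G) * hG'
        + (C c * C c * G * G') * hpow2
    have hQmon : ((X - C (r ℓ)) ^ (e ℓ - 1) * G).Monic :=
      ((monic_X_sub_C (r ℓ)).pow _).mul hGmon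
    have hQdeg : ((X - C (r ℓ)) ^ (e ℓ - 1) * G).natDegree = N - 1 := by
      rw [((monic_X_sub_C (r ℓ)).pow _).natDegree_mul hGmon, natDegree_pow,
        natDegree_X_sub_C, mul_one, hGdeg]
      have h2 := hsum_erase ℓ
      have h3 := he ℓ
      omega
    have hNpos : 0 < N := by
      have h2 := hsum_erase ℓ; have h3 := he ℓ; omega
    have hmodPP : (P ⟨ℓ, j⟩ * P ⟨ℓ, s⟩) %ₘ F₁
        = C (c * c * G.eval (r ℓ)) * ((X - C (r ℓ)) ^ (e ℓ - 1) * G) := by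
      rw [hsplit, add_modByMonic,
        (modByMonic_eq_zero_iff_dvd hmonF).mpr (dvd_mul_right _ _), add_zero]
      apply (modByMonic_eq_self_iff hmonF).mpr
      calc degree (C (c * c * G.eval (r ℓ)) * ((X - C (r ℓ)) ^ (e ℓ - 1) * G))
          ≤ degree (C (c * c * G.eval (r ℓ)))
              + degree ((X - C (r ℓ)) ^ (e ℓ - 1) * G) := degree_mul_le _ _
        _ ≤ 0 + degree ((X - C (r ℓ)) ^ (e ℓ - 1) * G) := by
            exact add_le_add degree_C_le le_rfl
        _ = degree ((X - C (r ℓ)) ^ (e ℓ - 1) * G) := zero_add _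
        _ < F₁.degree := by
            rw [degree_eq_natDegree hQmon.ne_zero, hQdeg, hdegF']
            exact_mod_cast Nat.sub_lt hNpos one_pos
    have hQcoeff : ((X - C (r ℓ)) ^ (e ℓ - 1) * G).coeff (N - 1) = 1 := by
      rw [← hQdeg]; exact hQmon.coeff_natDegree
    rw [hφ, hmodPP, coeff_C_mul, hQcoeff, mul_one]
    have hGev : G.eval (r ℓ) = ∏ t ∈ Finset.univ.erase ℓ, (r ℓ - r t) ^ (e t) := by
      rw [hGdef, eval_prod]
      exact Finset.prod_congr rfl fun t _ => by simp
    rw [hGev]; ring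
  -- determinant of H
  have hdetH : H.det = (-1 : k) ^ (N * (N - 1) / 2) := by
    rw [antitriangular_det H hH0, Finset.prod_congr rfl fun a _ => hH1 a,
      Finset.prod_const_one, mul_one]
  -- determinant of each block
  have hblockdet : ∀ ℓ : Fin n,
      (Matrix.of fun j s : Fin (e ℓ) => (M * H * Mᵀ) (σ ⟨ℓ, j⟩) (σ ⟨ℓ, s⟩)).det
      = (-1 : k) ^ (e ℓ * (e ℓ - 1) / 2)
          * (c ^ 2 * ∏ t ∈ Finset.univ.erase ℓ, (r ℓ - r t) ^ (e t)) ^ (e ℓ) := by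
    intro ℓ
    rw [antitriangular_det _ (fun j s hjs => ?_)]
    · congr 1
      have hval : ∀ j : Fin (e ℓ),
          (Matrix.of fun j s : Fin (e ℓ) => (M * H * Mᵀ) (σ ⟨ℓ, j⟩) (σ ⟨ℓ, s⟩)) j j.rev
          = c ^ 2 * ∏ t ∈ Finset.univ.erase ℓ, (r ℓ - r t) ^ (e t) := by
        intro j
        rw [Matrix.of_apply, hAent]
        apply hdiagval
        have h1 : (j.rev : ℕ) = e ℓ - (j.1 + 1) := Fin.val_rev j
        have h2 := j.2
        omega
      rw [Finset.prod_congr rfl fun j _ => hval j, Finset.prod_const, Finset.card_univ,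
        Fintype.card_fin]
    · rw [Matrix.of_apply, hAent]
      exact hintri ℓ j s hjs
  -- Gram determinant as product of blocks
  have hgram : (M * H * Mᵀ).det
      = ∏ ℓ : Fin n, ((-1 : k) ^ (e ℓ * (e ℓ - 1) / 2)
          * (c ^ 2 * ∏ t ∈ Finset.univ.erase ℓ, (r ℓ - r t) ^ (e t)) ^ (e ℓ)) := by
    rw [← Matrix.det_submatrix_equiv_self σ (M * H * Mᵀ),
      blockdiag_det ((M * H * Mᵀ).submatrix ⇑σ ⇑σ) (fun p q hpq => hoffdiag p q hpq)]
    exact Finset.prod_congr rfl fun ℓ _ => hblockdet ℓ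
  have hMHM : (M * H * Mᵀ).det = M.det ^ 2 * H.det := by
    rw [Matrix.det_mul, Matrix.det_mul, Matrix.det_transpose]; ring
  have hsq : M.det ^ 2 = (-1 : k) ^ (N * (N - 1) / 2)
      * ∏ ℓ : Fin n, ((-1 : k) ^ (e ℓ * (e ℓ - 1) / 2)
          * (c ^ 2 * ∏ t ∈ Finset.univ.erase ℓ, (r ℓ - r t) ^ (e t)) ^ (e ℓ)) := by
    have hone : (-1 : k) ^ (N * (N - 1) / 2) * (-1 : k) ^ (N * (N - 1) / 2) = 1 := by
      rw [← pow_add, ← two_mul, pow_mul, neg_one_sq, one_pow]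
    calc M.det ^ 2 = M.det ^ 2
          * ((-1 : k) ^ (N * (N - 1) / 2) * (-1 : k) ^ (N * (N - 1) / 2)) := by
          rw [hone, mul_one]
      _ = (-1 : k) ^ (N * (N - 1) / 2) * (M.det ^ 2 * H.det) := by rw [← hdetH]; ring
      _ = _ := by rw [← hMHM, hgram]
  -- final algebraic massaging
  rw [hsq]
  have hsplit1 : ∏ ℓ : Fin n, ((-1 : k) ^ (e ℓ * (e ℓ - 1) / 2)
      * (c ^ 2 * ∏ t ∈ Finset.univ.erase ℓ, (r ℓ - r t) ^ (e t)) ^ (e ℓ))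
      = ((-1 : k) ^ (∑ ℓ, e ℓ * (e ℓ - 1) / 2)) * (c ^ (2 * N)
        * ∏ ℓ : Fin n, ∏ t ∈ Finset.univ.erase ℓ, (r ℓ - r t) ^ (e t * e ℓ)) := by
    rw [Finset.prod_mul_distrib, Finset.prod_pow_eq_pow_sum]
    congr 1
    have : ∀ ℓ : Fin n, (c ^ 2 * ∏ t ∈ Finset.univ.erase ℓ, (r ℓ - r t) ^ (e t)) ^ (e ℓ)
        = (c ^ 2) ^ (e ℓ) * ∏ t ∈ Finset.univ.erase ℓ, (r ℓ - r t) ^ (e t * e ℓ) := by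
      intro ℓ
      rw [mul_pow, ← Finset.prod_pow]
      congr 1
      exact Finset.prod_congr rfl fun t _ => by rw [← pow_mul]
    rw [Finset.prod_congr rfl fun ℓ _ => this ℓ, Finset.prod_mul_distrib,
      Finset.prod_pow_eq_pow_sum, ← pow_mul, ← hN]
  rw [hsplit1]
  have hoffprod : ∏ ℓ : Fin n, ∏ t ∈ Finset.univ.erase ℓ, (r ℓ - r t) ^ (e t * e ℓ)
      = ((-1 : k) ^ (∑ i : Fin n, ∑ j ∈ Finset.Ioi i, e i * e j))
        * ∏ i : Fin n, ∏ j ∈ Finset.Ioi i, (r i - r j) ^ (2 * e i * e j) := by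
    have h1 : ∏ ℓ : Fin n, ∏ t ∈ Finset.univ.erase ℓ, (r ℓ - r t) ^ (e t * e ℓ)
        = ∏ i : Fin n, ∏ j ∈ Finset.Ioi i,
            ((r i - r j) ^ (e j * e i) * (r j - r i) ^ (e i * e j)) := by
      rw [Finset.prod_prod_Ioi_mul_eq_prod_prod_off_diag
        (fun a b : Fin n => (r b - r a) ^ (e a * e b))]
      exact Finset.prod_congr rfl fun i _ =>
        Finset.prod_congr (by ext x; simp [eq_comm]) (fun _ _ => rfl)
    rw [h1]
    have h2 : ∀ i j : Fin n, (r i - r j) ^ (e j * e i) * (r j - r i) ^ (e i * e j)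
        = (-1 : k) ^ (e i * e j) * (r i - r j) ^ (2 * e i * e j) := by
      intro i j
      rw [show r j - r i = -(r i - r j) from by ring, neg_pow,
        show 2 * e i * e j = e i * e j + e j * e i from by ring, pow_add]
      ring
    rw [Finset.prod_congr rfl fun i _ => Finset.prod_congr rfl fun j _ => h2 i j]
    rw [Finset.prod_congr rfl fun i _ => Finset.prod_mul_distrib, Finset.prod_mul_distrib]
    congr 1
    rw [Finset.prod_congr rfl fun i _ => Finset.prod_pow_eq_pow_sum _ _ _,
      Finset.prod_pow_eq_pow_sum]
  rw [hoffprod]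
  -- collect the signs
  have hchoose : ∀ m : ℕ, m * (m - 1) / 2 = m.choose 2 := fun m => (Nat.choose_two_right m).symm
  have hsigns : (-1 : k) ^ (N * (N - 1) / 2) * ((-1 : k) ^ (∑ ℓ, e ℓ * (e ℓ - 1) / 2)
      * (-1 : k) ^ (∑ i : Fin n, ∑ j ∈ Finset.Ioi i, e i * e j)) = 1 := by
    rw [← pow_add, ← pow_add]
    rw [Finset.sum_congr rfl fun ℓ _ => hchoose (e ℓ), hchoose N, hN, choose_split n e]
    rw [← two_mul, pow_mul, neg_one_sq, one_pow]
  calc (-1 : k) ^ (N * (N - 1) / 2) * ((-1 : k) ^ (∑ ℓ, e ℓ * (e ℓ - 1) / 2)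
        * (c ^ (2 * N) * ((-1 : k) ^ (∑ i : Fin n, ∑ j ∈ Finset.Ioi i, e i * e j)
          * ∏ i : Fin n, ∏ j ∈ Finset.Ioi i, (r i - r j) ^ (2 * e i * e j))))
      = ((-1 : k) ^ (N * (N - 1) / 2) * ((-1 : k) ^ (∑ ℓ, e ℓ * (e ℓ - 1) / 2)
          * (-1 : k) ^ (∑ i : Fin n, ∑ j ∈ Finset.Ioi i, e i * e j)))
        * (c ^ (2 * N) * ∏ i : Fin n, ∏ j ∈ Finset.Ioi i, (r i - r j) ^ (2 * e i * e j)) := by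
        ring
    _ = c ^ (2 * N) * ∏ i : Fin n, ∏ j ∈ Finset.Ioi i, (r i - r j) ^ (2 * e i * e j) := by
        rw [hsigns, one_mul]
end

section
/- Let k be a field, let r_1,…,r_n ∈ k be pairwise distinct, let m_1,…,m_n be positive integers, let N = m_1+⋯+m_n, and let f = ∏_{i=1}^n (X−r_i)^{m_i} ∈ k[X]. Let g ∈ k[X] with deg g < N and gcd(f,g) = 1, and let A_{ℓ,j} ∈ k (1 ≤ ℓ ≤ n, 1 ≤ j ≤ m_ℓ) be the unique scalars with g = Σ_{ℓ,j} A_{ℓ,j}·f/(X−r_ℓ)^j. Let B be the N×N Bézoutian matrix of f/g, with (p,q) entry (0 ≤ p,q ≤ N−1) the coefficient of X^p·Y^q in (f(X)g(Y) − f(Y)g(X))/(X−Y). Let Nwt be the N×N block-diagonal matrix whose ℓ-th block is the m_ℓ×m_ℓ local Newton matrix with (s,t) entry (1 ≤ s,t ≤ m_ℓ) equal to A_{ℓ,s+t−1} if s+t−1 ≤ m_ℓ and 0 otherwise. Let C be the N×N matrix with rows indexed by p ∈ {0,…,N−1} and columns by pairs (ℓ,j), whose (p,(ℓ,j)) entry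 is the coefficient of X^p in f/(X−r_ℓ)^j. Then B = C · Nwt · Cᵀ. In particular det B = (det C)² · ∏_{ℓ=1}^n det Nwt_{r_ℓ}. -/
open Polynomial

private lemma per_term {R : Type*} [CommRing R] (a b H H' : R) (mm j : ℕ) (hj : j < mm) :
    a ^ mm * H * (b ^ (mm - (j + 1)) * H') - a ^ (mm - (j + 1)) * H * (b ^ mm * H')
    = (a - b) * ∑ i ∈ Finset.range (j + 1),
        (a ^ (mm - ((j - i) + 1)) * H) * (b ^ (mm - (i + 1)) * H') := by
  obtain ⟨u, rfl⟩ : ∃ u, mm = u + (j + 1) := ⟨mm - (j + 1), by omega⟩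
  have h1 : u + (j + 1) - (j + 1) = u := by omega
  rw [h1]
  have h2 : ∀ i ∈ Finset.range (j + 1),
      (a ^ (u + (j + 1) - ((j - i) + 1)) * H) * (b ^ (u + (j + 1) - (i + 1)) * H')
      = (a ^ u * b ^ u * (H * H')) * (a ^ i * b ^ (j - i)) := by
    intro i hi
    have hi' : i ≤ j := by simpa [Nat.lt_succ_iff] using hi
    have e1 : u + (j + 1) - ((j - i) + 1) = u + i := by omega
    have e2 : u + (j + 1) - (i + 1) = u + (j - i) := by omega
    rw [e1, e2, pow_add, pow_add]; ring
  rw [Finset.sum_congr rfl h2, ← Finset.mul_sum]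
  have h3 := geom_sum₂_mul a b (j + 1)
  simp only [Nat.add_sub_cancel] at h3
  calc a ^ (u + (j + 1)) * H * (b ^ u * H') - a ^ u * H * (b ^ (u + (j + 1)) * H')
      = (a ^ u * b ^ u * (H * H')) * (a ^ (j + 1) - b ^ (j + 1)) := by
        rw [pow_add, pow_add]; ring
    _ = (a ^ u * b ^ u * (H * H')) *
        ((∑ i ∈ Finset.range (j + 1), a ^ i * b ^ (j - i)) * (a - b)) := by rw [h3]
    _ = (a - b) * ((a ^ u * b ^ u * (H * H')) * ∑ i ∈ Finset.range (j + 1), a ^ i * b ^ (j - i)) := by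
        ring

private lemma sum_tri {M : Type*} [AddCommMonoid M] (m : ℕ) (G : ℕ → ℕ → M)
    (hG : ∀ s t, m ≤ s + t → G s t = 0) :
    ∑ j ∈ Finset.range m, ∑ i ∈ Finset.range (j + 1), G (j - i) i
    = ∑ s ∈ Finset.range m, ∑ t ∈ Finset.range m, G s t := by
  have step1 : ∀ j ∈ Finset.range m,
      ∑ i ∈ Finset.range (j + 1), G (j - i) i
      = ∑ t ∈ Finset.range m, if t ≤ j then G (j - t) t else 0 := by
    intro j hj
    have hj' : j < m := Finset.mem_range.mp hj
    rw [← Finset.sum_filter]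
    have : (Finset.range m).filter (fun t => t ≤ j) = Finset.range (j + 1) := by
      ext t; simp only [Finset.mem_filter, Finset.mem_range, Nat.lt_succ_iff]; omega
    rw [this]
  rw [Finset.sum_congr rfl step1, Finset.sum_comm]
  have step2 : ∀ t ∈ Finset.range m,
      ∑ j ∈ Finset.range m, (if t ≤ j then G (j - t) t else 0)
      = ∑ s ∈ Finset.range m, G s t := by
    intro t ht
    have ht' : t < m := Finset.mem_range.mp ht
    rw [← Finset.sum_filter]
    have h1 : (Finset.range m).filter (fun j => t ≤ j) = Finset.Ico t m := by
      ext j; simp only [Finset.mem_filter, Finset.mem_range, Finset.mem_Ico]; omega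
    rw [h1, Finset.sum_Ico_eq_sum_range]
    simp only [Nat.add_sub_cancel_left]
    refine Finset.sum_subset (by intro x hx; simp only [Finset.mem_range] at *; omega) ?_
    intro x hx hx'
    simp only [Finset.mem_range, not_lt] at hx hx'
    exact hG x t (by omega)
  rw [Finset.sum_congr rfl step2, Finset.sum_comm]

private lemma sigma_sum {M : Type*} [AddCommMonoid M] {n : ℕ} (m : Fin n → ℕ)
    (F : Fin n → ℕ → M) :
    ∑ p : (ℓ : Fin n) × Fin (m ℓ), F p.1 p.2.1
    = ∑ ℓ : Fin n, ∑ j ∈ Finset.range (m ℓ), F ℓ j := by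
  rw [← Finset.univ_sigma_univ, Finset.sum_sigma]
  exact Finset.sum_congr rfl fun ℓ _ => Fin.sum_univ_eq_sum_range (fun j => F ℓ j) (m ℓ)

private lemma sigma_pair_sum {M : Type*} [AddCommMonoid M] {n : ℕ} {m : Fin n → ℕ}
    (F : ((ℓ : Fin n) × Fin (m ℓ)) → ((ℓ : Fin n) × Fin (m ℓ)) → M)
    (hF : ∀ u v, u.1 ≠ v.1 → F u v = 0) :
    ∑ u : (ℓ : Fin n) × Fin (m ℓ), ∑ v : (ℓ : Fin n) × Fin (m ℓ), F u v
    = ∑ ℓ : Fin n, ∑ s : Fin (m ℓ), ∑ t : Fin (m ℓ), F ⟨ℓ, s⟩ ⟨ℓ, t⟩ := by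
  rw [← Finset.univ_sigma_univ, Finset.sum_sigma]
  refine Finset.sum_congr rfl fun ℓ _ => Finset.sum_congr rfl fun s _ => ?_
  rw [Finset.sum_sigma]
  rw [Finset.sum_eq_single ℓ]
  · intro b _ hb
    exact Finset.sum_eq_zero fun t _ => hF _ _ (Ne.symm hb)
  · intro h; exact absurd (Finset.mem_univ ℓ) h

private lemma coeff_CCmul {k : Type*} [CommRing k] (c : k) (u v : Polynomial k) (p q : ℕ) :
    ((Polynomial.C (Polynomial.C c) * (Polynomial.C u * v.map Polynomial.C)).coeff q).coeff p
    = c * (u.coeff p * v.coeff q) := by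
  have h : Polynomial.C (Polynomial.C c) * (Polynomial.C u * v.map Polynomial.C)
      = Polynomial.C (Polynomial.C c * u) * v.map Polynomial.C := by
    rw [map_mul]; ring
  rw [h, Polynomial.coeff_C_mul, Polynomial.coeff_map, Polynomial.coeff_mul_C,
    Polynomial.coeff_C_mul]
  ring

private noncomputable def eAux {k : Type*} [CommRing k] {n : ℕ} (r : Fin n → k) (m : Fin n → ℕ)
    (ℓ : Fin n) (j : ℕ) : Polynomial k :=
  (X - C (r ℓ)) ^ (m ℓ - (j + 1)) * ∏ l ∈ Finset.univ.erase ℓ, (X - C (r l)) ^ (m l)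

private lemma eAux_def {k : Type*} [CommRing k] {n : ℕ} (r : Fin n → k) (m : Fin n → ℕ)
    (ℓ : Fin n) (j : ℕ) :
    eAux r m ℓ j
    = (X - C (r ℓ)) ^ (m ℓ - (j + 1)) * ∏ l ∈ Finset.univ.erase ℓ, (X - C (r l)) ^ (m l) := rfl

private lemma L1 {k : Type*} [Field k] {n : ℕ} (r : Fin n → k) (m : Fin n → ℕ)
    (f : Polynomial k)
    (hfl : ∀ ℓ : Fin n, f = (X - C (r ℓ)) ^ (m ℓ) *
      ∏ l ∈ Finset.univ.erase ℓ, (X - C (r l)) ^ (m l))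
    (A' : Fin n → ℕ → k) (hA'0 : ∀ ℓ j, m ℓ ≤ j → A' ℓ j = 0) :
    (Polynomial.C Polynomial.X - Polynomial.X) *
      ∑ ℓ : Fin n, ∑ s ∈ Finset.range (m ℓ), ∑ t ∈ Finset.range (m ℓ),
        Polynomial.C (Polynomial.C (A' ℓ (s + t))) *
          (Polynomial.C (eAux r m ℓ s) * (eAux r m ℓ t).map Polynomial.C)
    = ∑ ℓ : Fin n, ∑ j ∈ Finset.range (m ℓ),
        Polynomial.C (Polynomial.C (A' ℓ j)) *
          (Polynomial.C f * (eAux r m ℓ j).map Polynomial.C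
            - Polynomial.C (eAux r m ℓ j) * f.map Polynomial.C) := by
  rw [Finset.mul_sum]
  refine Finset.sum_congr rfl fun ℓ _ => ?_
  set a : Polynomial (Polynomial k) := Polynomial.C (X - C (r ℓ)) with ha
  set b : Polynomial (Polynomial k) := Polynomial.X - Polynomial.C (Polynomial.C (r ℓ)) with hb
  set H : Polynomial (Polynomial k) :=
    Polynomial.C (∏ l ∈ Finset.univ.erase ℓ, (X - C (r l)) ^ (m l)) with hH
  set H' : Polynomial (Polynomial k) :=
    (∏ l ∈ Finset.univ.erase ℓ, (X - C (r l)) ^ (m l)).map Polynomial.C with hH'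
  have hab : a - b = Polynomial.C Polynomial.X - Polynomial.X := by
    rw [ha, hb, map_sub]; ring
  have hce : ∀ s : ℕ, Polynomial.C (eAux r m ℓ s) = a ^ (m ℓ - (s + 1)) * H := by
    intro s; rw [eAux, map_mul, map_pow, ha, hH]
  have hme : ∀ s : ℕ, (eAux r m ℓ s).map Polynomial.C = b ^ (m ℓ - (s + 1)) * H' := by
    intro s
    rw [eAux, Polynomial.map_mul, Polynomial.map_pow, hH', hb, Polynomial.map_sub,
      Polynomial.map_X, Polynomial.map_C]
  have hcf : Polynomial.C f = a ^ (m ℓ) * H := by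
    rw [hfl ℓ, map_mul, map_pow, ha, hH]
  have hmf : f.map Polynomial.C = b ^ (m ℓ) * H' := by
    rw [hfl ℓ, Polynomial.map_mul, Polynomial.map_pow, hH', hb, Polynomial.map_sub,
      Polynomial.map_X, Polynomial.map_C]
  have step1 : ∀ j ∈ Finset.range (m ℓ),
      Polynomial.C (Polynomial.C (A' ℓ j)) *
        (Polynomial.C f * (eAux r m ℓ j).map Polynomial.C
          - Polynomial.C (eAux r m ℓ j) * f.map Polynomial.C)
      = (Polynomial.C Polynomial.X - Polynomial.X) *
          ∑ i ∈ Finset.range (j + 1),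
            Polynomial.C (Polynomial.C (A' ℓ ((j - i) + i))) *
              (Polynomial.C (eAux r m ℓ (j - i)) * (eAux r m ℓ i).map Polynomial.C) := by
    intro j hj
    have hj' : j < m ℓ := Finset.mem_range.mp hj
    have e1 : ∀ i ∈ Finset.range (j + 1),
        Polynomial.C (Polynomial.C (A' ℓ ((j - i) + i))) *
          (Polynomial.C (eAux r m ℓ (j - i)) * (eAux r m ℓ i).map Polynomial.C)
        = Polynomial.C (Polynomial.C (A' ℓ j)) *
            ((a ^ (m ℓ - ((j - i) + 1)) * H) * (b ^ (m ℓ - (i + 1)) * H')) := by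
      intro i hi
      have hi' : i ≤ j := by simpa [Nat.lt_succ_iff] using hi
      have : j - i + i = j := by omega
      rw [this, hce, hme]
    rw [Finset.sum_congr rfl e1, ← Finset.mul_sum, hcf, hmf, hce, hme,
      per_term a b H H' (m ℓ) j hj', ← hab]
    ring
  rw [Finset.sum_congr rfl step1, ← Finset.mul_sum]
  refine congrArg _ ?_
  rw [← sum_tri (m ℓ)
    (fun s t => Polynomial.C (Polynomial.C (A' ℓ (s + t))) *
      (Polynomial.C (eAux r m ℓ s) * (eAux r m ℓ t).map Polynomial.C))
    (fun s t hst => by simp [hA'0 ℓ (s + t) hst])]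

/-- **Bézoutian = change of basis applied to the block-diagonal local Newton
matrices.** Let `f = ∏ (X - rᵢ)^{mᵢ}` have pairwise distinct roots, let `g` be coprime
to `f` with `deg g < N`, and let `A_{ℓ,j}` be the partial fraction coefficients of
`g/f`. Let `B` be the Bézoutian matrix of `f/g`, let `Nwt` be the block diagonal
matrix of the local Newton matrices, and let `Cmat` be the matrix of coefficients of
the Newton basis elements `f/(X - r_ℓ)^j`. Then `B = Cmat · Nwt · Cmatᵀ`, and in
particular `det B = (det Cmat)² · ∏_ℓ det Nwt_{r_ℓ}`. Bivariate polynomials are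
modeled as `(k[X])[Y]`, so that `f(X)g(Y) - f(Y)g(X) = C f * g.map C - f.map C * C g`
and `X - Y = C X - X`. -/
theorem bezoutian_eq_newton_change_of_basis (k : Type*) [Field k] (n : ℕ)
    (r : Fin n → k) (hr : Function.Injective r)
    (m : Fin n → ℕ) (hm : ∀ i, 0 < m i)
    (N : ℕ) (hN : N = ∑ i, m i)
    (f : Polynomial k) (hf : f = ∏ i, (X - C (r i)) ^ m i)
    (g : Polynomial k) (hg : g.degree < N) (hfg : IsCoprime f g)
    (A : ((ℓ : Fin n) × Fin (m ℓ)) → k)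
    (hA : g = ∑ p : (ℓ : Fin n) × Fin (m ℓ), C (A p) *
      ((X - C (r p.1)) ^ (m p.1 - (p.2.1 + 1)) *
        ∏ l ∈ Finset.univ.erase p.1, (X - C (r l)) ^ (m l)))
    (σ : ((ℓ : Fin n) × Fin (m ℓ)) ≃ Fin N)
    (Q : Polynomial (Polynomial k))
    (hQ : Polynomial.C f * g.map Polynomial.C - f.map Polynomial.C * Polynomial.C g =
      (Polynomial.C Polynomial.X - Polynomial.X) * Q)
    (B : Matrix (Fin N) (Fin N) k)
    (hB : ∀ p q : Fin N, B p q = (Q.coeff q.1).coeff p.1)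
    (Nwt : Matrix (Fin N) (Fin N) k)
    (hNwt : ∀ p q : (ℓ : Fin n) × Fin (m ℓ), Nwt (σ p) (σ q) =
      if h : p.1 = q.1 ∧ p.2.1 + q.2.1 < m p.1
      then A ⟨p.1, ⟨p.2.1 + q.2.1, h.2⟩⟩ else 0)
    (Cmat : Matrix (Fin N) (Fin N) k)
    (hC : ∀ (p : Fin N) (q : (ℓ : Fin n) × Fin (m ℓ)), Cmat p (σ q) =
      ((X - C (r q.1)) ^ (m q.1 - (q.2.1 + 1)) *
        ∏ l ∈ Finset.univ.erase q.1, (X - C (r l)) ^ (m l)).coeff p.1) :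
    B = Cmat * Nwt * Cmat.transpose ∧
    B.det = Cmat.det ^ 2 *
      ∏ ℓ : Fin n, (Matrix.of fun s t : Fin (m ℓ) =>
        if h : s.1 + t.1 < m ℓ then A ⟨ℓ, ⟨s.1 + t.1, h⟩⟩ else 0).det := by
  classical
  set A' : Fin n → ℕ → k := fun ℓ j => if h : j < m ℓ then A ⟨ℓ, ⟨j, h⟩⟩ else 0 with hA'def
  have hA'fin : ∀ (ℓ : Fin n) (j : Fin (m ℓ)), A' ℓ j.1 = A ⟨ℓ, j⟩ := by
    intro ℓ j
    simp only [hA'def, j.isLt, dif_pos, Fin.eta]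
  have hA'0 : ∀ ℓ j, m ℓ ≤ j → A' ℓ j = 0 := by
    intro ℓ j h
    simp only [hA'def]
    rw [dif_neg (by omega)]
  have hfl : ∀ ℓ : Fin n, f = (X - C (r ℓ)) ^ (m ℓ) *
      ∏ l ∈ Finset.univ.erase ℓ, (X - C (r l)) ^ (m l) := fun ℓ => by
    rw [hf, ← Finset.mul_prod_erase _ _ (Finset.mem_univ ℓ)]
  have hd : (Polynomial.C Polynomial.X - Polynomial.X : Polynomial (Polynomial k)) ≠ 0 := by
    intro h
    have := congrArg (fun p => Polynomial.coeff p 1) h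
    simp at this
  -- rewrite the Bézout numerator as a double sum
  have hgsum : Polynomial.C f * g.map Polynomial.C - f.map Polynomial.C * Polynomial.C g
      = ∑ ℓ : Fin n, ∑ j ∈ Finset.range (m ℓ),
          Polynomial.C (Polynomial.C (A' ℓ j)) *
            (Polynomial.C f * (eAux r m ℓ j).map Polynomial.C
              - Polynomial.C (eAux r m ℓ j) * f.map Polynomial.C) := by
    rw [← sigma_sum m (fun ℓ j => Polynomial.C (Polynomial.C (A' ℓ j)) *
      (Polynomial.C f * (eAux r m ℓ j).map Polynomial.C
        - Polynomial.C (eAux r m ℓ j) * f.map Polynomial.C))]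
    conv_lhs => rw [hA]
    rw [map_sum, Polynomial.map_sum]
    simp only [Polynomial.map_mul, Polynomial.map_C, map_mul]
    rw [Finset.mul_sum, Finset.mul_sum, ← Finset.sum_sub_distrib]
    refine Finset.sum_congr rfl fun p _ => ?_
    have h1 : A' p.1 p.2.1 = A p := by rw [hA'fin p.1 p.2, Sigma.eta]
    rw [h1]
    simp only [eAux_def, Polynomial.map_mul, map_mul]
    ring
  have hQeq : Q = ∑ ℓ : Fin n, ∑ s ∈ Finset.range (m ℓ), ∑ t ∈ Finset.range (m ℓ),
      Polynomial.C (Polynomial.C (A' ℓ (s + t))) *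
        (Polynomial.C (eAux r m ℓ s) * (eAux r m ℓ t).map Polynomial.C) := by
    apply mul_left_cancel₀ hd
    rw [← hQ, L1 r m f hfl A' hA'0, ← hgsum]
  -- entrywise values of B
  have hcoeff : ∀ p q : Fin N, B p q
      = ∑ ℓ : Fin n, ∑ s : Fin (m ℓ), ∑ t : Fin (m ℓ),
          A' ℓ (s.1 + t.1) * ((eAux r m ℓ s.1).coeff p.1 * (eAux r m ℓ t.1).coeff q.1) := by
    intro p q
    rw [hB, hQeq]
    simp only [Polynomial.finset_sum_coeff, coeff_CCmul]
    refine Finset.sum_congr rfl fun ℓ _ => ?_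
    rw [← Fin.sum_univ_eq_sum_range (fun s =>
      ∑ t ∈ Finset.range (m ℓ),
        A' ℓ (s + t) * ((eAux r m ℓ s).coeff p.1 * (eAux r m ℓ t).coeff q.1)) (m ℓ)]
    refine Finset.sum_congr rfl fun s _ => ?_
    rw [← Fin.sum_univ_eq_sum_range (fun t =>
      A' ℓ (s.1 + t) * ((eAux r m ℓ s.1).coeff p.1 * (eAux r m ℓ t).coeff q.1)) (m ℓ)]
  -- diagonal values of Nwt
  have hdiag : ∀ (ℓ : Fin n) (s t : Fin (m ℓ)),
      Nwt (σ ⟨ℓ, s⟩) (σ ⟨ℓ, t⟩) = A' ℓ (s.1 + t.1) := by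
    intro ℓ s t
    rw [hNwt]
    by_cases h2 : s.1 + t.1 < m ℓ
    · rw [dif_pos ⟨rfl, h2⟩]
      simp only [hA'def]
      rw [dif_pos h2]
    · rw [dif_neg (fun hc => h2 hc.2)]
      simp only [hA'def]
      rw [dif_neg h2]
  -- entrywise values of Cmat * Nwt * Cmatᵀ
  have hM : ∀ p q : Fin N, (Cmat * Nwt * Cmat.transpose) p q
      = ∑ ℓ : Fin n, ∑ s : Fin (m ℓ), ∑ t : Fin (m ℓ),
          A' ℓ (s.1 + t.1) * ((eAux r m ℓ s.1).coeff p.1 * (eAux r m ℓ t.1).coeff q.1) := by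
    intro p q
    simp only [Matrix.mul_apply, Matrix.transpose_apply]
    have e1 : ∑ v : Fin N, (∑ u : Fin N, Cmat p u * Nwt u v) * Cmat q v
        = ∑ u : (ℓ : Fin n) × Fin (m ℓ), ∑ v : (ℓ : Fin n) × Fin (m ℓ),
            Cmat p (σ u) * Nwt (σ u) (σ v) * Cmat q (σ v) := by
      calc ∑ v : Fin N, (∑ u : Fin N, Cmat p u * Nwt u v) * Cmat q v
          = ∑ v' : (ℓ : Fin n) × Fin (m ℓ),
              (∑ u : Fin N, Cmat p u * Nwt u (σ v')) * Cmat q (σ v') :=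
            (Equiv.sum_comp σ (fun v => (∑ u : Fin N, Cmat p u * Nwt u v) * Cmat q v)).symm
        _ = ∑ v' : (ℓ : Fin n) × Fin (m ℓ), ∑ u' : (ℓ : Fin n) × Fin (m ℓ),
              Cmat p (σ u') * Nwt (σ u') (σ v') * Cmat q (σ v') := by
            refine Finset.sum_congr rfl fun v' _ => ?_
            rw [Finset.sum_mul,
              ← Equiv.sum_comp σ (fun u => Cmat p u * Nwt u (σ v') * Cmat q (σ v'))]
        _ = ∑ u' : (ℓ : Fin n) × Fin (m ℓ), ∑ v' : (ℓ : Fin n) × Fin (m ℓ),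
              Cmat p (σ u') * Nwt (σ u') (σ v') * Cmat q (σ v') := Finset.sum_comm
    rw [e1, sigma_pair_sum (fun u v => Cmat p (σ u) * Nwt (σ u) (σ v) * Cmat q (σ v))
      (fun u v h => by
        show Cmat p (σ u) * Nwt (σ u) (σ v) * Cmat q (σ v) = 0
        rw [hNwt, dif_neg (fun hc => h hc.1)]; simp)]
    refine Finset.sum_congr rfl fun ℓ _ => Finset.sum_congr rfl fun s _ =>
      Finset.sum_congr rfl fun t _ => ?_
    have hCps : Cmat p (σ ⟨ℓ, s⟩) = (eAux r m ℓ s.1).coeff p.1 := hC p ⟨ℓ, s⟩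
    have hCqt : Cmat q (σ ⟨ℓ, t⟩) = (eAux r m ℓ t.1).coeff q.1 := hC q ⟨ℓ, t⟩
    rw [hdiag ℓ s t, hCps, hCqt]
    ring
  have hBmat : B = Cmat * Nwt * Cmat.transpose := by
    ext p q
    rw [hcoeff, hM]
  refine ⟨hBmat, ?_⟩
  -- determinant computation
  set b : Fin N → Fin n := fun i => (σ.symm i).1 with hbdef
  have hbt : Nwt.BlockTriangular b := by
    intro i j hij
    have h := hNwt (σ.symm i) (σ.symm j)
    rw [Equiv.apply_symm_apply, Equiv.apply_symm_apply] at h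
    rw [h, dif_neg (fun hc => absurd hc.1 (ne_of_gt hij))]
  have hNdet : Nwt.det = ∏ ℓ : Fin n, (Matrix.of fun s t : Fin (m ℓ) =>
      if h : s.1 + t.1 < m ℓ then A ⟨ℓ, ⟨s.1 + t.1, h⟩⟩ else 0).det := by
    rw [hbt.det_fintype]
    refine Finset.prod_congr rfl fun ℓ _ => ?_
    have hbij : Function.Bijective (fun s : Fin (m ℓ) =>
        (⟨σ ⟨ℓ, s⟩, by simp [hbdef]⟩ : {i : Fin N // b i = ℓ})) := by
      constructor
      · intro s t hst
        have h2 : (⟨ℓ, s⟩ : (ℓ : Fin n) × Fin (m ℓ)) = ⟨ℓ, t⟩ :=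
          σ.injective (congrArg Subtype.val hst)
        exact eq_of_heq (Sigma.mk.inj_iff.mp h2).2
      · rintro ⟨i, hi⟩
        rcases hu : σ.symm i with ⟨a', s⟩
        have ha' : a' = ℓ := by
          have : (σ.symm i).1 = ℓ := hi
          rw [hu] at this
          exact this
        subst ha'
        exact ⟨s, Subtype.ext ((congrArg σ hu.symm).trans (σ.apply_symm_apply i))⟩
    let ea := Equiv.ofBijective _ hbij
    rw [← Matrix.det_submatrix_equiv_self ea (Nwt.toSquareBlock b ℓ)]
    congr 1
    ext s t
    have hcoe : ∀ u : Fin (m ℓ), ((ea u : {i : Fin N // b i = ℓ}) : Fin N) = σ ⟨ℓ, u⟩ :=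
      fun u => rfl
    simp only [Matrix.submatrix_apply, Matrix.toSquareBlock_def, Matrix.of_apply, hcoe]
    rw [hNwt]
    by_cases h2 : s.1 + t.1 < m ℓ
    · rw [dif_pos ⟨rfl, h2⟩, dif_pos h2]
    · rw [dif_neg (fun hc => h2 hc.2), dif_neg h2]
  rw [hBmat, Matrix.det_mul, Matrix.det_mul, Matrix.det_transpose, hNdet]
  ring
end
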